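/- Let 𝒜 be a finite nonempty set, μ a translation invariant probability measure on 𝒜^ℤ, and m ≥ 1 an integer. With G_k = 2^k ℤ and G_k^− = {j · 2^k : j < 0}, let B be any finite subset of G_m^− and, for 1 ≤ k ≤ m, let B_k be any finite subset of ({2^{k−1}} + G_k^−) ∪ G_k. Then the entropy density satisfies the upper bound s_μ ≤ (1/2^m) · S( {0} | B ) + Σ_{k=1}^m (1/2^k) · S( {2^{k−1}} | B_k ). -/

import Mathlib

open MeasureTheory Real Filter Pointwise

/-- Probability of the cylinder set determined by the configuration `x` on the finite
set `Λ ⊆ ℤ`. -/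
noncomputable def cylProb1 {𝒜 : Type*} [MeasurableSpace 𝒜]
    (μ : Measure (ℤ → 𝒜)) (Λ : Finset ℤ) (x : Λ → 𝒜) : ℝ :=
  (μ {ω | ∀ v : Λ, ω v.1 = x v}).toReal

/-- The entropy `S(Λ)` of a finite set of sites `Λ ⊆ ℤ` with respect to `μ`. -/
noncomputable def entS1 {𝒜 : Type*} [Fintype 𝒜] [MeasurableSpace 𝒜]
    (μ : Measure (ℤ → 𝒜)) (Λ : Finset ℤ) : ℝ :=
  -∑ x : (Λ → 𝒜), cylProb1 μ Λ x * Real.log (cylProb1 μ Λ x)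

/-- The conditional entropy `S(Λ | Λ')` (terms with zero probability vanish since
`Real.log 0 = 0` and `0 * log 0 = 0`). -/
noncomputable def condEnt1 {𝒜 : Type*} [Fintype 𝒜] [MeasurableSpace 𝒜]
    (μ : Measure (ℤ → 𝒜)) (Λ Λ' : Finset ℤ) : ℝ :=
  -∑ x : ((Λ ∪ Λ' : Finset ℤ) → 𝒜),
      cylProb1 μ (Λ ∪ Λ') x *
        Real.log (cylProb1 μ (Λ ∪ Λ') x /
          cylProb1 μ Λ' (fun v => x ⟨v.1, Finset.mem_union_right Λ v.2⟩))

/-- `μ` is translation invariant: it is preserved by the shift `σ`, `(σx)(i) = x(i+1)`. -/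
def TransInv1 {𝒜 : Type*} [MeasurableSpace 𝒜] (μ : Measure (ℤ → 𝒜)) : Prop :=
  μ.map (fun ω (i : ℤ) => ω (i + 1)) = μ

open Classical in
/-- The finite set `Λ' ∩ [-n, n]` for a (possibly infinite) `Λ' ⊆ ℤ`. -/
noncomputable def interBox1 (Λ' : Set ℤ) (n : ℕ) : Finset ℤ :=
  (Finset.Icc (-(n : ℤ)) (n : ℤ)).filter (· ∈ Λ')


/-!
Order the sites of `[0, n 2^m)` hierarchically: first the multiples of `2^m`, then, for
`k = m, …, 1`, the sites `≡ 2^(k-1) mod 2^k`, each level from left to right. By the chain rule the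
entropy of the window is the sum of the conditional entropies of its sites given all earlier ones.
Conditioning on fewer sites can only increase conditional entropy (strong subadditivity), and the
hypotheses on `B` and `B_k` say exactly that the translate of `B` (resp. `B_k`) attached to a
top-level (resp. level-`k`) site consists of earlier sites; by translation invariance each such term
is at most `S({0} | B)` (resp. `S({2^(k-1)} | B_k)`). Translates leaving `[0, n 2^m)` are absorbed by
a collar of width `M` on both sides, which costs at most `2 S([0, M))`. Counting `n` top-level sites
and `n 2^(m-k)` sites on level `k` gives `S([0, n 2^m + 2M)) ≤ n 2^m R + 2 S([0, M))`, where `R` is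
the claimed bound, and Fekete's lemma `s_μ ≤ S([0, L)) / L` yields `s_μ ≤ R` as `n → ∞`.
-/

open Finset

section RealSequences

lemma le_add_sum_Icc_of_le_add {a b : ℕ → ℝ} {m : ℕ}
    (h : ∀ k ∈ Icc 1 m, a (k - 1) ≤ a k + b k) : a 0 ≤ a m + ∑ k ∈ Icc 1 m, b k := by
  induction m with
  | zero => simp
  | succ m ih =>
    have hm := ih fun k hk => h k (by simp only [mem_Icc] at hk ⊢; omega)
    have hstep := h (m + 1) (by simp)
    rw [Nat.add_sub_cancel] at hstep
    rw [sum_Icc_succ_top (by omega)]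
    linarith

lemma nonpos_of_forall_nat_mul_le {a C : ℝ} (h : ∀ n : ℕ, n * a ≤ C) : a ≤ 0 := by
  by_contra! ha
  obtain ⟨n, hn⟩ := exists_nat_gt (C / a)
  rw [div_lt_iff₀ ha] at hn
  linarith [h n]

lemma Subadditive.lim_mul_le {u : ℕ → ℝ} (h : Subadditive u)
    (hbdd : BddBelow (Set.range fun n => u n / n)) (hu : 0 ≤ u 0) (n : ℕ) : h.lim * n ≤ u n := by
  rcases n.eq_zero_or_pos with rfl | hn
  · simpa using hu
  · exact (le_div_iff₀ (by exact_mod_cast hn)).1 (h.lim_le_div hbdd hn.ne')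

end RealSequences

section FiniteWeights

variable {ι α β γ : Type*} [Fintype ι] {p : ι → ℝ}

open Classical in
noncomputable def law (p : ι → ℝ) (X : ι → α) (a : α) : ℝ := ∑ i with X i = a, p i

lemma law_nonneg (hp : 0 ≤ p) (X : ι → α) (a : α) : 0 ≤ law p X a :=
  sum_nonneg fun i _ => hp i

lemma le_law (hp : 0 ≤ p) (X : ι → α) (i : ι) : p i ≤ law p X (X i) :=
  single_le_sum (f := p) (fun j _ => hp j) (by simp)

lemma sum_law_mul [Fintype α] (X : ι → α) (G : α → ℝ) :
    ∑ a, law p X a * G a = ∑ i, p i * G (X i) := by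
  classical
  simp only [law, sum_mul]
  rw [← sum_fiberwise univ X]
  exact sum_congr rfl fun a _ => sum_congr rfl fun i hi => by rw [(mem_filter.1 hi).2]

open Classical in
lemma law_comp [Fintype β] (X : ι → β) (f : β → γ) (c : γ) :
    law p (f ∘ X) c = ∑ b with f b = c, law p X b := by
  simp only [law]
  convert (sum_fiberwise_eq_sum_filter univ {b | f b = c} X p).symm using 2
  simp

/-- Gibbs' inequality, termwise. -/
lemma mul_log_div_le_sub {x y : ℝ} (hx : 0 ≤ x) (hy : 0 ≤ y) (hxy : 0 < x → 0 < y) :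
    x * Real.log (y / x) ≤ y - x := by
  rcases hx.eq_or_lt with rfl | hx
  · simpa using hy
  have := Real.log_le_sub_one_of_pos (div_pos (hxy hx) hx)
  calc x * Real.log (y / x) ≤ x * (y / x - 1) := by gcongr
    _ = y - x := by field_simp

lemma sum_law_mul_law_div_law_le [Fintype α] [Fintype β] (hp : 0 ≤ p) {V : ι → α} {Y : ι → β}
    (f : α → γ) (g : β → γ) (hfg : ∀ i, f (V i) = g (Y i))
    (hinj : Function.Injective fun i => (V i, Y i)) :
    ∑ i, law p V (V i) * law p Y (Y i) / law p (g ∘ Y) (g (Y i)) ≤ ∑ i, p i := by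
  classical
  set F : α × β → ℝ := fun ab =>
    if f ab.1 = g ab.2 then law p V ab.1 * law p Y ab.2 / law p (g ∘ Y) (g ab.2) else 0
  have hF : 0 ≤ F := fun ab => by
    dsimp only [F]
    split_ifs
    · exact div_nonneg (mul_nonneg (law_nonneg hp _ _) (law_nonneg hp _ _)) (law_nonneg hp _ _)
    · exact le_rfl
  calc ∑ i, law p V (V i) * law p Y (Y i) / law p (g ∘ Y) (g (Y i))
      = ∑ i, F (V i, Y i) := by simp [F, hfg]
    _ ≤ ∑ ab, F ab := by
      rw [← sum_image fun i _ j _ h => hinj h]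
      exact sum_le_sum_of_subset_of_nonneg (subset_univ _) fun ab _ _ => hF ab
    _ = ∑ a, law p V a / law p (g ∘ Y) (f a) * law p (g ∘ Y) (f a) := by
      rw [Fintype.sum_prod_type]
      refine sum_congr rfl fun a _ => ?_
      have hFa : ∀ b, F (a, b) =
          if g b = f a then law p V a / law p (g ∘ Y) (f a) * law p Y b else 0 := fun b => by
        simp only [F, eq_comm (a := f a)]
        split_ifs with h
        · rw [h]; ring
        · rfl
      simp_rw [hFa]
      rw [← sum_filter, ← mul_sum, ← law_comp]
    _ ≤ ∑ a, law p V a := by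
      refine sum_le_sum fun a _ => ?_
      rcases (law_nonneg hp (g ∘ Y) (f a)).eq_or_lt with h | h
      · rw [← h]; simpa using law_nonneg hp V a
      · rw [div_mul_cancel₀ _ h.ne']
    _ = ∑ i, p i := by simpa using sum_law_mul V 1

/-- In entropy notation, `H(V | Y) ≤ H(V | g ∘ Y)`; on the left `p i` stands for the joint law of
`(V, Y)` at `(V i, Y i)`, which is legitimate because `(V, Y)` is injective. -/
lemma neg_sum_mul_log_div_law_le [Fintype α] [Fintype β] (hp : 0 ≤ p) {V : ι → α} {Y : ι → β}
    (f : α → γ) (g : β → γ) (hfg : ∀ i, f (V i) = g (Y i))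
    (hinj : Function.Injective fun i => (V i, Y i)) :
    -∑ i, p i * Real.log (p i / law p Y (Y i)) ≤
      -∑ i, p i * Real.log (law p V (V i) / law p (g ∘ Y) (g (Y i))) := by
  set q : ι → ℝ := fun i => law p V (V i) * law p Y (Y i) / law p (g ∘ Y) (g (Y i))
  have hq : 0 ≤ q := fun i =>
    div_nonneg (mul_nonneg (law_nonneg hp _ _) (law_nonneg hp _ _)) (law_nonneg hp _ _)
  have hterm : ∀ i, p i * Real.log (law p V (V i) / law p (g ∘ Y) (g (Y i))) -
      p i * Real.log (p i / law p Y (Y i)) = p i * Real.log (q i / p i) := fun i => by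
    rcases (hp i).eq_or_lt with h | h
    · simp [← h]
    have hV := h.trans_le (le_law hp V i)
    have hY := h.trans_le (le_law hp Y i)
    have hW := h.trans_le (le_law hp (g ∘ Y) i)
    simp only [q, Function.comp_apply] at hW ⊢
    rw [← mul_sub, Real.log_div hV.ne' hW.ne', Real.log_div h.ne' hY.ne',
      Real.log_div (div_pos (mul_pos hV hY) hW).ne' h.ne', Real.log_div (mul_pos hV hY).ne' hW.ne',
      Real.log_mul hV.ne' hY.ne']
    ring
  have gibbs : ∑ i, p i * Real.log (q i / p i) ≤ ∑ i, q i - ∑ i, p i := by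
    rw [← sum_sub_distrib]
    exact sum_le_sum fun i _ => mul_log_div_le_sub (hp i) (hq i) fun h =>
      (div_pos (mul_pos (h.trans_le (le_law hp V i)) (h.trans_le (le_law hp Y i)))
        (h.trans_le (le_law hp (g ∘ Y) i)))
  have hsum : ∑ i, (p i * Real.log (law p V (V i) / law p (g ∘ Y) (g (Y i))) -
      p i * Real.log (p i / law p Y (Y i))) ≤ 0 := by
    rw [sum_congr rfl fun i _ => hterm i]
    linarith [sum_law_mul_law_div_law_le hp f g hfg hinj]
  rw [sum_sub_distrib] at hsum
  linarith

end FiniteWeights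

section Cylinders

abbrev configRestrict {𝒜 : Type*} {Λ Λ' : Finset ℤ} (h : Λ ⊆ Λ') (y : Λ' → 𝒜) : Λ → 𝒜 :=
  fun v => y ⟨v.1, h v.2⟩

variable {𝒜 : Type*} [MeasurableSpace 𝒜] (μ : Measure (ℤ → 𝒜))

lemma cylProb1_eq_measureReal (Λ : Finset ℤ) (x : Λ → 𝒜) :
    cylProb1 μ Λ x = μ.real (Λ.restrict ⁻¹' {x}) := by
  simp only [cylProb1, measureReal_def]
  congr
  ext ω
  simp [funext_iff]

lemma cylProb1_nonneg (Λ : Finset ℤ) : 0 ≤ cylProb1 μ Λ := fun _ => ENNReal.toReal_nonneg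

variable [Fintype 𝒜] [MeasurableSingletonClass 𝒜] [IsFiniteMeasure μ]

lemma law_cylProb1 {Λ Λ' : Finset ℤ} (h : Λ ⊆ Λ') (x : Λ → 𝒜) :
    law (cylProb1 μ Λ') (configRestrict h) x = cylProb1 μ Λ x := by
  classical
  simp only [law, cylProb1_eq_measureReal]
  rw [sum_measureReal_preimage_singleton]
  · congr 1
    ext ω
    simp only [Set.mem_preimage, coe_filter, mem_univ, true_and, Set.mem_ofPred_eq,
      Set.mem_singleton_iff]
    rfl
  · exact fun y _ => Finset.measurable_restrict _ (measurableSet_singleton y)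

lemma sum_cylProb1_mul_comp_configRestrict {Λ Λ' : Finset ℤ} (h : Λ ⊆ Λ') (G : (Λ → 𝒜) → ℝ) :
    ∑ y, cylProb1 μ Λ' y * G (configRestrict h y) = ∑ x, cylProb1 μ Λ x * G x := by
  simp_rw [← law_cylProb1 μ h, sum_law_mul]

lemma cylProb1_le_cylProb1_configRestrict {Λ Λ' : Finset ℤ} (h : Λ ⊆ Λ') (y : Λ' → 𝒜) :
    cylProb1 μ Λ' y ≤ cylProb1 μ Λ (configRestrict h y) :=
  (le_law (cylProb1_nonneg μ Λ') _ y).trans_eq (law_cylProb1 μ h _)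

end Cylinders

section Entropy

variable {𝒜 : Type*} [Fintype 𝒜] [MeasurableSpace 𝒜] (μ : Measure (ℤ → 𝒜))

lemma entS1_nonneg [IsProbabilityMeasure μ] (Λ : Finset ℤ) : 0 ≤ entS1 μ Λ := by
  rw [entS1, neg_nonneg]
  exact sum_nonpos fun x _ => Real.mul_log_nonpos (cylProb1_nonneg μ Λ x) measureReal_le_one

variable [MeasurableSingletonClass 𝒜]

section Finite

variable [IsFiniteMeasure μ]

lemma condEnt1_eq_sub (Λ Λ' : Finset ℤ) :
    condEnt1 μ Λ Λ' = entS1 μ (Λ ∪ Λ') - entS1 μ Λ' := by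
  have hterm : ∀ y, cylProb1 μ (Λ ∪ Λ') y *
      Real.log (cylProb1 μ (Λ ∪ Λ') y / cylProb1 μ Λ' (configRestrict subset_union_right y)) =
        cylProb1 μ (Λ ∪ Λ') y * Real.log (cylProb1 μ (Λ ∪ Λ') y) -
          cylProb1 μ (Λ ∪ Λ') y * Real.log (cylProb1 μ Λ' (configRestrict subset_union_right y)) := by
    intro y
    rcases (cylProb1_nonneg μ _ y).eq_or_lt with h | h
    · simp [← h]
    · have h' := h.trans_le (cylProb1_le_cylProb1_configRestrict μ subset_union_right y)
      rw [Real.log_div h.ne' h'.ne', mul_sub]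
  rw [condEnt1, sum_congr rfl fun y _ => hterm y, sum_sub_distrib,
    sum_cylProb1_mul_comp_configRestrict μ subset_union_right fun x => Real.log (cylProb1 μ Λ' x)]
  simp only [entS1]
  ring

lemma condEnt1_nonneg (Λ Λ' : Finset ℤ) : 0 ≤ condEnt1 μ Λ Λ' := by
  rw [condEnt1, neg_nonneg]
  refine sum_nonpos fun y _ => mul_nonpos_of_nonneg_of_nonpos (cylProb1_nonneg μ _ y) ?_
  exact Real.log_nonpos (div_nonneg (cylProb1_nonneg μ _ y) (cylProb1_nonneg μ _ _))
    (div_le_one_of_le₀ (cylProb1_le_cylProb1_configRestrict μ subset_union_right y)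
      (cylProb1_nonneg μ _ _))

lemma entS1_mono {Λ Λ' : Finset ℤ} (h : Λ ⊆ Λ') : entS1 μ Λ ≤ entS1 μ Λ' := by
  have := condEnt1_nonneg μ (Λ' \ Λ) Λ
  rw [condEnt1_eq_sub, sdiff_union_of_subset h] at this
  linarith

lemma condEnt1_anti (Λ : Finset ℤ) {C Λ' : Finset ℤ} (hC : C ⊆ Λ') :
    condEnt1 μ Λ Λ' ≤ condEnt1 μ Λ C := by
  have hV : Λ ∪ C ⊆ Λ ∪ Λ' := union_subset_union_right hC
  have hinj : Function.Injective fun y : (Λ ∪ Λ' : Finset ℤ) → 𝒜 =>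
      (configRestrict hV y, configRestrict subset_union_right y) := by
    intro y y' hyy
    simp only [Prod.mk.injEq] at hyy
    funext ⟨v, hv⟩
    rcases mem_union.1 hv with h | h
    · exact congrFun hyy.1 ⟨v, mem_union_left _ h⟩
    · exact congrFun hyy.2 ⟨v, h⟩
  have key := neg_sum_mul_log_div_law_le (cylProb1_nonneg μ (Λ ∪ Λ'))
    (configRestrict (𝒜 := 𝒜) subset_union_right) (configRestrict hC) (fun _ => rfl) hinj
  have hW : configRestrict hC ∘ configRestrict (𝒜 := 𝒜) (subset_union_right (s₁ := Λ)) =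
      configRestrict (hC.trans subset_union_right) := rfl
  rw [hW] at key
  simp only [law_cylProb1] at key
  refine key.trans_eq ?_
  rw [condEnt1, ← sum_cylProb1_mul_comp_configRestrict μ hV]

lemma entS1_union_eq_add_sum (C A : Finset ℤ) :
    entS1 μ (C ∪ A) = entS1 μ C + ∑ x ∈ A, condEnt1 μ {x} (C ∪ A.filter (· < x)) := by
  induction A using Finset.induction_on_max with
  | empty => simp
  | insert a s hs ih =>
    have ha : a ∉ s := fun h => lt_irrefl a (hs a h)
    have hfa : (insert a s).filter (· < a) = s := by
      rw [filter_insert, if_neg (lt_irrefl a)]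
      exact filter_true_of_mem hs
    have hfx : ∀ x ∈ s, (insert a s).filter (· < x) = s.filter (· < x) := fun x hx => by
      rw [filter_insert, if_neg (hs x hx).not_gt]
    rw [sum_insert ha, hfa, sum_congr rfl fun x hx => by rw [hfx x hx], condEnt1_eq_sub,
      ← union_assoc, union_comm {a}, union_assoc, ← insert_eq]
    linarith

end Finite

lemma entS1_union_le [IsProbabilityMeasure μ] (Λ Λ' : Finset ℤ) :
    entS1 μ (Λ ∪ Λ') ≤ entS1 μ Λ + entS1 μ Λ' := by
  have := condEnt1_anti μ Λ (empty_subset Λ')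
  rw [condEnt1_eq_sub, condEnt1_eq_sub, union_empty] at this
  linarith [entS1_nonneg μ ∅]

end Entropy

section Translation

variable {𝒜 : Type*} [MeasurableSpace 𝒜] {μ : Measure (ℤ → 𝒜)}

lemma TransInv1.measurePreserving_translate (hinv : TransInv1 μ) (a : ℤ) :
    MeasurePreserving (translate a) μ μ := by
  have hmeas : ∀ b : ℤ, Measurable (translate (α := 𝒜) b) := fun b =>
    measurable_pi_lambda _ fun i => measurable_pi_apply (i - b)
  have hadd : ∀ b c : ℤ, translate (α := 𝒜) (b + c) = translate b ∘ translate c :=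
    fun b c => funext (translate_add b c)
  have hzero : translate (α := 𝒜) (0 : ℤ) = id := funext translate_zero
  have hneg : MeasurePreserving (translate (-1)) μ μ := by
    have : translate (α := 𝒜) (-1 : ℤ) = fun ω i => ω (i + 1) := by
      funext ω i
      simp
    exact ⟨hmeas _, this ▸ hinv⟩
  have hpos : MeasurePreserving (translate 1) μ μ := by
    refine ⟨hmeas 1, ?_⟩
    calc μ.map (translate 1) = (μ.map (translate (-1))).map (translate 1) := by rw [hneg.map_eq]
      _ = μ := by
        rw [Measure.map_map (hmeas 1) (hmeas (-1)), ← hadd, add_neg_cancel, hzero, Measure.map_id]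
  induction a using Int.induction_on with
  | zero => rw [hzero]; exact MeasurePreserving.id μ
  | succ n ih => rw [hadd]; exact ih.comp hpos
  | pred n ih => rw [sub_eq_add_neg, hadd]; exact ih.comp hneg

def imageAddEquiv (Λ : Finset ℤ) (a : ℤ) : Λ ≃ Λ.image (· + a) :=
  (Equiv.addRight a).subtypeEquiv fun v => by simp

variable [MeasurableSingletonClass 𝒜]

lemma cylProb1_image_add (hinv : TransInv1 μ) (Λ : Finset ℤ) (a : ℤ)
    (x : Λ.image (· + a) → 𝒜) :
    cylProb1 μ (Λ.image (· + a)) x = cylProb1 μ Λ (x ∘ imageAddEquiv Λ a) := by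
  rw [cylProb1_eq_measureReal, cylProb1_eq_measureReal,
    ← (hinv.measurePreserving_translate (-a)).measureReal_preimage
      (s := Λ.restrict ⁻¹' {x ∘ imageAddEquiv Λ a})
      (Finset.measurable_restrict _ (measurableSet_singleton _)).nullMeasurableSet]
  congr 1
  ext ω
  simp only [Set.mem_preimage, Set.mem_singleton_iff, funext_iff, Finset.restrict,
    translate_apply, sub_neg_eq_add, Function.comp_apply]
  exact (imageAddEquiv Λ a).symm.forall_congr_left

variable [Fintype 𝒜]

lemma entS1_image_add (hinv : TransInv1 μ) (Λ : Finset ℤ) (a : ℤ) :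
    entS1 μ (Λ.image (· + a)) = entS1 μ Λ := by
  rw [entS1, entS1, Fintype.sum_equiv ((imageAddEquiv Λ a).arrowCongr (Equiv.refl 𝒜)).symm]
  intro x
  rw [cylProb1_image_add hinv]
  rfl

lemma subadditive_entS1_Ico [IsProbabilityMeasure μ] (hinv : TransInv1 μ) :
    Subadditive fun n : ℕ => entS1 μ (Ico 0 (n : ℤ)) := by
  intro a b
  have hsplit : Ico (0 : ℤ) ↑(a + b) = Ico 0 (a : ℤ) ∪ (Ico 0 (b : ℤ)).image (· + (a : ℤ)) := by
    rw [image_add_right_Ico, zero_add, Ico_union_Ico_eq_Ico (by omega) (by omega), Nat.cast_add,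
      add_comm]
  dsimp only
  rw [hsplit, ← entS1_image_add hinv (Ico 0 (b : ℤ)) a]
  exact entS1_union_le μ _ _

variable [IsFiniteMeasure μ]

lemma condEnt1_image_add (hinv : TransInv1 μ) (Λ Λ' : Finset ℤ) (a : ℤ) :
    condEnt1 μ (Λ.image (· + a)) (Λ'.image (· + a)) = condEnt1 μ Λ Λ' := by
  rw [condEnt1_eq_sub, condEnt1_eq_sub, ← image_union, entS1_image_add hinv,
    entS1_image_add hinv]

lemma condEnt1_singleton_le_of_image_add_subset (hinv : TransInv1 μ) {D E : Finset ℤ} {x : ℤ}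
    (s : ℤ) (h : D.image (· + (x - s)) ⊆ E) : condEnt1 μ {x} E ≤ condEnt1 μ {s} D :=
  calc condEnt1 μ {x} E ≤ condEnt1 μ {x} (D.image (· + (x - s))) := condEnt1_anti μ _ h
    _ = condEnt1 μ {s} D := by
      rw [← condEnt1_image_add hinv {s} D (x - s), image_singleton, add_sub_cancel]

end Translation

section Dyadic

noncomputable def residueSites (N d r : ℤ) : Finset ℤ := (Ico 0 N).filter (· % d = r)

noncomputable def collar (N M : ℤ) : Finset ℤ := Ico (-M) 0 ∪ Ico N (N + M)

lemma card_residueSites_le {d : ℤ} (hd : 0 < d) (c : ℕ) (r : ℤ) :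
    #(residueSites (c * d) d r) ≤ c := by
  calc #(residueSites (c * d) d r) ≤ #(Ico (0 : ℤ) c) := by
        refine card_le_card_of_injOn (· / d) (fun x hx => ?_) fun x hx y hy hxy => ?_
        · simp only [residueSites, coe_filter, mem_Ico, Set.mem_ofPred_eq] at hx
          simp only [coe_Ico, Set.mem_Ico]
          exact ⟨Int.ediv_nonneg hx.1.1 hd.le, (Int.ediv_lt_iff_lt_mul hd).2 hx.1.2⟩
        · simp only [residueSites, coe_filter, Set.mem_ofPred_eq] at hx hy
          rw [← Int.emod_add_mul_ediv x d, ← Int.emod_add_mul_ediv y d, hx.2, hy.2]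
          exact congrArg (r + d * ·) hxy
    _ = c := by simp

lemma residueSites_zero_subset {d : ℤ} (hd : 0 < d) (N : ℤ) :
    residueSites N d 0 ⊆ residueSites N (2 * d) 0 ∪ residueSites N (2 * d) d := by
  intro x hx
  simp only [residueSites, mem_union, mem_filter] at hx ⊢
  obtain ⟨q, rfl⟩ := Int.dvd_of_emod_eq_zero hx.2
  rw [mul_comm 2 d, Int.mul_emod_mul_of_pos _ _ hd]
  rcases Int.emod_two_eq q with h | h <;> simp [h, hx.1]

lemma mem_collar_or_mem_residueSites {N M d y : ℤ} (hy : y ∈ Ico (-M) (N + M)) :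
    y ∈ collar N M ∨ y ∈ residueSites N d (y % d) := by
  simp only [collar, residueSites, mem_union, mem_filter, mem_Ico, and_true] at hy ⊢
  omega

end Dyadic

section Hierarchy

variable {𝒜 : Type*} [Fintype 𝒜] [MeasurableSpace 𝒜] [MeasurableSingletonClass 𝒜]
  {μ : Measure (ℤ → 𝒜)}

lemma condEnt1_top_site_le [IsFiniteMeasure μ] (hinv : TransInv1 μ) {m : ℕ} {B : Finset ℤ}
    (hB : (↑B : Set ℤ) ⊆ {x : ℤ | ∃ j : ℤ, j < 0 ∧ x = j * 2 ^ m}) {M : ℤ}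
    (hM : ∀ b ∈ B, |b| ≤ M) {N x : ℤ} (hx : x ∈ residueSites N (2 ^ m) 0) :
    condEnt1 μ {x} (collar N M ∪ (residueSites N (2 ^ m) 0).filter (· < x)) ≤
      condEnt1 μ {0} B := by
  simp only [residueSites, mem_filter, mem_Ico] at hx
  refine condEnt1_singleton_le_of_image_add_subset hinv 0 fun y hy => ?_
  obtain ⟨b, hb, rfl⟩ := mem_image.1 hy
  rw [sub_zero]
  have hbM := abs_le.1 (hM b hb)
  obtain ⟨j, hj, rfl⟩ := hB hb
  have hneg : j * 2 ^ m < 0 := mul_neg_of_neg_of_pos hj (by positivity)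
  have hwin : x + j * 2 ^ m ∈ Ico (-M) (N + M) := mem_Ico.2 ⟨by linarith, by linarith⟩
  rw [add_comm]
  rcases mem_collar_or_mem_residueSites (d := 2 ^ m) hwin with h | h
  · exact mem_union_left _ h
  · rw [Int.add_mul_emod_self_right, hx.2] at h
    exact mem_union_right _ (mem_filter.2 ⟨h, by linarith⟩)

lemma condEnt1_level_site_le [IsFiniteMeasure μ] (hinv : TransInv1 μ) {k : ℕ} {Bk : Finset ℤ}
    (hBk : (↑Bk : Set ℤ) ⊆ {x : ℤ | ∃ j : ℤ, j < 0 ∧ x = 2 ^ (k - 1) + j * 2 ^ k} ∪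
      {x : ℤ | ∃ j : ℤ, x = j * 2 ^ k}) {M : ℤ} (hM : ∀ b ∈ Bk, |b - 2 ^ (k - 1)| ≤ M)
    {N x : ℤ} (hx : x ∈ residueSites N (2 ^ k) (2 ^ (k - 1))) :
    condEnt1 μ {x} ((collar N M ∪ residueSites N (2 ^ k) 0) ∪
        (residueSites N (2 ^ k) (2 ^ (k - 1))).filter (· < x)) ≤
      condEnt1 μ {2 ^ (k - 1)} Bk := by
  simp only [residueSites, mem_filter, mem_Ico] at hx
  refine condEnt1_singleton_le_of_image_add_subset hinv (2 ^ (k - 1)) fun y hy => ?_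
  obtain ⟨b, hb, rfl⟩ := mem_image.1 hy
  have hbM := abs_le.1 (hM b hb)
  have hwin : b + (x - 2 ^ (k - 1)) ∈ Ico (-M) (N + M) := mem_Ico.2 ⟨by linarith, by linarith⟩
  rcases hBk hb with ⟨j, hj, rfl⟩ | ⟨j, rfl⟩
  · have hneg : j * 2 ^ k < 0 := mul_neg_of_neg_of_pos hj (by positivity)
    rw [show 2 ^ (k - 1) + j * 2 ^ k + (x - 2 ^ (k - 1)) = x + j * 2 ^ k by ring] at hwin ⊢
    rcases mem_collar_or_mem_residueSites (d := 2 ^ k) hwin with h | h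
    · exact mem_union_left _ (mem_union_left _ h)
    · rw [Int.add_mul_emod_self_right, hx.2] at h
      exact mem_union_right _ (mem_filter.2 ⟨h, by linarith⟩)
  · have hdiv := Int.emod_add_mul_ediv x (2 ^ k)
    rw [hx.2] at hdiv
    rw [show j * 2 ^ k + (x - 2 ^ (k - 1)) = (j + x / 2 ^ k) * 2 ^ k by linear_combination -hdiv]
      at hwin ⊢
    rcases mem_collar_or_mem_residueSites (d := 2 ^ k) hwin with h | h
    · exact mem_union_left _ (mem_union_left _ h)
    · rw [Int.mul_emod_left] at h
      exact mem_union_left _ (mem_union_right _ h)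

lemma entS1_top_level_le [IsFiniteMeasure μ] (hinv : TransInv1 μ) (n : ℕ) {m : ℕ}
    {B : Finset ℤ} (hB : (↑B : Set ℤ) ⊆ {x : ℤ | ∃ j : ℤ, j < 0 ∧ x = j * 2 ^ m}) {M : ℤ}
    (hM : ∀ b ∈ B, |b| ≤ M) :
    entS1 μ (collar (n * 2 ^ m) M ∪ residueSites (n * 2 ^ m) (2 ^ m) 0) ≤
      entS1 μ (collar (n * 2 ^ m) M) + n * condEnt1 μ {0} B := by
  set F := residueSites (n * 2 ^ m) (2 ^ m) 0
  have hcard : #F ≤ n := card_residueSites_le (by positivity) n 0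
  calc entS1 μ (collar (n * 2 ^ m) M ∪ F)
      = entS1 μ (collar (n * 2 ^ m) M) +
          ∑ x ∈ F, condEnt1 μ {x} (collar (n * 2 ^ m) M ∪ F.filter (· < x)) :=
        entS1_union_eq_add_sum μ _ _
    _ ≤ entS1 μ (collar (n * 2 ^ m) M) + #F • condEnt1 μ {0} B := by
        gcongr
        exact sum_le_card_nsmul _ _ _ fun x hx => condEnt1_top_site_le hinv hB hM hx
    _ ≤ entS1 μ (collar (n * 2 ^ m) M) + n * condEnt1 μ {0} B := by
        rw [nsmul_eq_mul]
        gcongr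
        exact condEnt1_nonneg μ _ _

lemma entS1_level_le [IsFiniteMeasure μ] (hinv : TransInv1 μ) (n : ℕ) {m k : ℕ} (hk : 1 ≤ k)
    (hkm : k ≤ m) {Bk : Finset ℤ}
    (hBk : (↑Bk : Set ℤ) ⊆ {x : ℤ | ∃ j : ℤ, j < 0 ∧ x = 2 ^ (k - 1) + j * 2 ^ k} ∪
      {x : ℤ | ∃ j : ℤ, x = j * 2 ^ k}) {M : ℤ} (hM : ∀ b ∈ Bk, |b - 2 ^ (k - 1)| ≤ M) :
    entS1 μ (collar (n * 2 ^ m) M ∪ residueSites (n * 2 ^ m) (2 ^ (k - 1)) 0) ≤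
      entS1 μ (collar (n * 2 ^ m) M ∪ residueSites (n * 2 ^ m) (2 ^ k) 0) +
        n * 2 ^ m / 2 ^ k * condEnt1 μ {2 ^ (k - 1)} Bk := by
  set C := collar (n * 2 ^ m) M ∪ residueSites (n * 2 ^ m) (2 ^ k) 0
  set A := residueSites (n * 2 ^ m) (2 ^ k) (2 ^ (k - 1))
  have hsplit : residueSites (n * 2 ^ m) (2 ^ (k - 1)) 0 ⊆
      residueSites (n * 2 ^ m) (2 ^ k) 0 ∪ A := by
    have h := residueSites_zero_subset (d := 2 ^ (k - 1)) (by positivity) (n * 2 ^ m)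
    rwa [← pow_succ', Nat.sub_add_cancel hk] at h
  have hcard : (#A : ℝ) ≤ n * 2 ^ m / 2 ^ k := by
    have h := card_residueSites_le (d := 2 ^ k) (by positivity) (n * 2 ^ (m - k)) (2 ^ (k - 1))
    rw [Nat.cast_mul, Nat.cast_pow, Nat.cast_ofNat, mul_assoc, ← pow_add,
      Nat.sub_add_cancel hkm] at h
    calc (#A : ℝ) ≤ (n * 2 ^ (m - k) : ℕ) := by exact_mod_cast h
      _ = n * 2 ^ m / 2 ^ k := by
        push_cast
        rw [pow_sub₀ _ two_ne_zero hkm]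
        ring
  calc entS1 μ (collar (n * 2 ^ m) M ∪ residueSites (n * 2 ^ m) (2 ^ (k - 1)) 0)
      ≤ entS1 μ (C ∪ A) := entS1_mono μ (by rw [union_assoc]; exact union_subset_union_right hsplit)
    _ = entS1 μ C + ∑ x ∈ A, condEnt1 μ {x} (C ∪ A.filter (· < x)) :=
        entS1_union_eq_add_sum μ C A
    _ ≤ entS1 μ C + #A • condEnt1 μ {2 ^ (k - 1)} Bk := by
        gcongr
        exact sum_le_card_nsmul _ _ _ fun x hx => condEnt1_level_site_le hinv hBk hM hx
    _ ≤ entS1 μ C + n * 2 ^ m / 2 ^ k * condEnt1 μ {2 ^ (k - 1)} Bk := by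
        rw [nsmul_eq_mul]
        gcongr
        exact condEnt1_nonneg μ _ _

variable [IsProbabilityMeasure μ]

lemma entS1_collar_le (hinv : TransInv1 μ) (N M : ℤ) :
    entS1 μ (collar N M) ≤ 2 * entS1 μ (Ico 0 M) := by
  have hleft : Ico (-M) 0 = (Ico 0 M).image (· + -M) := by
    rw [image_add_right_Ico, zero_add, add_neg_cancel]
  have hright : Ico N (N + M) = (Ico 0 M).image (· + N) := by
    rw [image_add_right_Ico, zero_add, add_comm]
  calc entS1 μ (collar N M) ≤ entS1 μ (Ico (-M) 0) + entS1 μ (Ico N (N + M)) :=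
        entS1_union_le μ _ _
    _ = 2 * entS1 μ (Ico 0 M) := by
        rw [hleft, hright, entS1_image_add hinv, entS1_image_add hinv, two_mul]

lemma entS1_Ico_le (hinv : TransInv1 μ) {m : ℕ} {B : Finset ℤ}
    (hB : (↑B : Set ℤ) ⊆ {x : ℤ | ∃ j : ℤ, j < 0 ∧ x = j * 2 ^ m}) {Bk : ℕ → Finset ℤ}
    (hBk : ∀ k, 1 ≤ k → k ≤ m →
      (↑(Bk k) : Set ℤ) ⊆
        ({x : ℤ | ∃ j : ℤ, j < 0 ∧ x = 2 ^ (k - 1) + j * 2 ^ k} ∪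
          {x : ℤ | ∃ j : ℤ, x = j * 2 ^ k}))
    {M : ℕ} (hMB : ∀ b ∈ B, |b| ≤ M) (hMBk : ∀ k ∈ Icc 1 m, ∀ b ∈ Bk k, |b - 2 ^ (k - 1)| ≤ M)
    (n : ℕ) :
    entS1 μ (Ico 0 ((n * 2 ^ m + 2 * M : ℕ) : ℤ)) ≤ 2 * entS1 μ (Ico 0 (M : ℤ)) +
      n * 2 ^ m * ((1 / 2 ^ m) * condEnt1 μ {0} B +
        ∑ k ∈ Icc 1 m, (1 / 2 ^ k : ℝ) * condEnt1 μ {(2 : ℤ) ^ (k - 1)} (Bk k)) := by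
  have hshift : Ico 0 ((n * 2 ^ m + 2 * M : ℕ) : ℤ) =
      (Ico (-(M : ℤ)) (n * 2 ^ m + M)).image (· + (M : ℤ)) := by
    rw [image_add_right_Ico, neg_add_cancel]
    push_cast
    ring_nf
  have hwindow : Ico (-(M : ℤ)) (n * 2 ^ m + M) ⊆
      collar (n * 2 ^ m) M ∪ residueSites (n * 2 ^ m) (2 ^ 0) 0 := fun y hy => by
    rcases mem_collar_or_mem_residueSites (d := 2 ^ 0) hy with h | h
    · exact mem_union_left _ h
    · rw [pow_zero, Int.emod_one] at h
      exact mem_union_right _ (by rwa [pow_zero])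
  have hlevels := le_add_sum_Icc_of_le_add
    (a := fun k => entS1 μ (collar (n * 2 ^ m) M ∪ residueSites (n * 2 ^ m) (2 ^ k) 0))
    (b := fun k => n * 2 ^ m / 2 ^ k * condEnt1 μ {2 ^ (k - 1)} (Bk k)) fun k hk =>
      entS1_level_le hinv n (mem_Icc.1 hk).1 (mem_Icc.1 hk).2
        (hBk k (mem_Icc.1 hk).1 (mem_Icc.1 hk).2) (hMBk k hk)
  have htop := entS1_top_level_le hinv n hB hMB
  have hcollar := entS1_collar_le hinv (n * 2 ^ m) M
  have hwin := entS1_mono μ hwindow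
  have hR : (n : ℝ) * 2 ^ m * ((1 / 2 ^ m) * condEnt1 μ {0} B +
        ∑ k ∈ Icc 1 m, (1 / 2 ^ k : ℝ) * condEnt1 μ {(2 : ℤ) ^ (k - 1)} (Bk k)) =
      n * condEnt1 μ {0} B + ∑ k ∈ Icc 1 m, n * 2 ^ m / 2 ^ k * condEnt1 μ {2 ^ (k - 1)} (Bk k) := by
    rw [mul_add, mul_sum]
    congr 1
    · field_simp
    · exact sum_congr rfl fun k _ => by ring
  rw [hshift, entS1_image_add hinv, hR]
  calc entS1 μ (Ico (-(M : ℤ)) (n * 2 ^ m + M))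
      ≤ entS1 μ (collar (n * 2 ^ m) M ∪ residueSites (n * 2 ^ m) (2 ^ m) 0) +
          ∑ k ∈ Icc 1 m, (n : ℝ) * 2 ^ m / 2 ^ k * condEnt1 μ {2 ^ (k - 1)} (Bk k) :=
        hwin.trans hlevels
    _ ≤ 2 * entS1 μ (Ico 0 (M : ℤ)) + n * condEnt1 μ {0} B +
          ∑ k ∈ Icc 1 m, (n : ℝ) * 2 ^ m / 2 ^ k * condEnt1 μ {2 ^ (k - 1)} (Bk k) := by
        gcongr
        linarith
    _ = _ := by ring

end Hierarchy

theorem entropy_density_hierarchical_upper_bound_general {𝒜 : Type*} [Fintype 𝒜]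
    [MeasurableSpace 𝒜] [MeasurableSingletonClass 𝒜]
    (μ : Measure (ℤ → 𝒜)) [IsProbabilityMeasure μ] (hinv : TransInv1 μ)
    (m : ℕ)
    (B : Finset ℤ) (hB : (↑B : Set ℤ) ⊆ {x : ℤ | ∃ j : ℤ, j < 0 ∧ x = j * 2 ^ m})
    (Bk : ℕ → Finset ℤ)
    (hBk : ∀ k, 1 ≤ k → k ≤ m →
      (↑(Bk k) : Set ℤ) ⊆
        ({x : ℤ | ∃ j : ℤ, j < 0 ∧ x = 2 ^ (k - 1) + j * 2 ^ k} ∪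
          {x : ℤ | ∃ j : ℤ, x = j * 2 ^ k})) :
    ∃ s : ℝ,
      Filter.Tendsto (fun n : ℕ => entS1 μ (Finset.Ico (0 : ℤ) (n : ℤ)) / (n : ℝ))
        Filter.atTop (nhds s) ∧
      s ≤ (1 / 2 ^ m) * condEnt1 μ {0} B +
        ∑ k ∈ Finset.Icc 1 m, (1 / 2 ^ k : ℝ) * condEnt1 μ {(2 : ℤ) ^ (k - 1)} (Bk k) := by
  set R := (1 / 2 ^ m) * condEnt1 μ {0} B +
    ∑ k ∈ Finset.Icc 1 m, (1 / 2 ^ k : ℝ) * condEnt1 μ {(2 : ℤ) ^ (k - 1)} (Bk k)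
  set D := B ∪ (Icc 1 m).biUnion fun k => (Bk k).image (· - 2 ^ (k - 1))
  set M := D.sup Int.natAbs
  have hD : ∀ b ∈ D, |b| ≤ M := fun b hb => by
    rw [Int.abs_eq_natAbs]
    exact_mod_cast le_sup (f := Int.natAbs) hb
  have hsub := subadditive_entS1_Ico (μ := μ) hinv
  have hbdd : BddBelow (Set.range fun n : ℕ => entS1 μ (Ico 0 (n : ℤ)) / n) :=
    ⟨0, by rintro _ ⟨n, rfl⟩; exact div_nonneg (entS1_nonneg μ _) n.cast_nonneg⟩
  refine ⟨hsub.lim, hsub.tendsto_lim hbdd, ?_⟩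
  have hwindow := entS1_Ico_le hinv hB hBk (M := M)
    (fun b hb => hD b (mem_union_left _ hb))
    (fun k hk b hb => hD _ (mem_union_right _ (mem_biUnion.2 ⟨k, hk, mem_image_of_mem _ hb⟩)))
  have key : (2 : ℝ) ^ m * (hsub.lim - R) ≤ 0 := by
    refine nonpos_of_forall_nat_mul_le (C := 2 * entS1 μ (Ico 0 (M : ℤ)) - 2 * M * hsub.lim)
      fun n => ?_
    have := (hsub.lim_mul_le hbdd (entS1_nonneg μ _) _).trans (hwindow n)
    push_cast at this
    linarith
  nlinarith [pow_pos (two_pos : (0 : ℝ) < 2) m]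

/-- finite-window upper bound. For a translation invariant probability
measure `μ` on `𝒜^ℤ`, `m ≥ 1`, any finite `B ⊆ G_m^-` and, for `1 ≤ k ≤ m`, any finite
`B_k ⊆ ({2^{k−1}} + G_k^-) ∪ G_k`, the entropy density satisfies
`s_μ ≤ (1/2^m)·S({0} | B) + Σ_{k=1}^m (1/2^k)·S({2^{k−1}} | B_k)`. -/
theorem entropy_density_hierarchical_upper_bound {𝒜 : Type*} [Fintype 𝒜] [Nonempty 𝒜]
    [MeasurableSpace 𝒜] [MeasurableSingletonClass 𝒜]
    (μ : Measure (ℤ → 𝒜)) [IsProbabilityMeasure μ] (hinv : TransInv1 μ)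
    (m : ℕ) (hm : 1 ≤ m)
    (B : Finset ℤ) (hB : (↑B : Set ℤ) ⊆ {x : ℤ | ∃ j : ℤ, j < 0 ∧ x = j * 2 ^ m})
    (Bk : ℕ → Finset ℤ)
    (hBk : ∀ k, 1 ≤ k → k ≤ m →
      (↑(Bk k) : Set ℤ) ⊆
        ({x : ℤ | ∃ j : ℤ, j < 0 ∧ x = 2 ^ (k - 1) + j * 2 ^ k} ∪
          {x : ℤ | ∃ j : ℤ, x = j * 2 ^ k})) :
    ∃ s : ℝ,
      Filter.Tendsto (fun n : ℕ => entS1 μ (Finset.Ico (0 : ℤ) (n : ℤ)) / (n : ℝ))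
        Filter.atTop (nhds s) ∧
      s ≤ (1 / 2 ^ m) * condEnt1 μ {0} B +
        ∑ k ∈ Finset.Icc 1 m, (1 / 2 ^ k : ℝ) * condEnt1 μ {(2 : ℤ) ^ (k - 1)} (Bk k) :=
  entropy_density_hierarchical_upper_bound_general μ hinv m B hB Bk hBk
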